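/- arXiv:quant-ph/0307148 — 2 statements merged into one kernel-verified Lean document; each statement's English description precedes it below -/
import Mathlib

section
/- If P(a) and P(b) are Pauli products both of odd weight, then their commutator is either zero or equal (up to a nonzero scalar) to a Pauli product of odd weight. -/
open Matrix Complex

noncomputable def pauli : Fin 4 → Matrix (Fin 2) (Fin 2) ℂ
  | 0 => 1
  | 1 => !![0, 1; 1, 0]
  | 2 => !![0, -I; I, 0]
  | 3 => !![1, 0; 0, -1]

/-- Tensor product of Pauli matrices indexed by `a : Fin n → Fin 4`. -/
noncomputable def PauliProd {n : ℕ} (a : Fin n → Fin 4) :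
    Matrix (Fin n → Fin 2) (Fin n → Fin 2) ℂ :=
  Matrix.of fun i j => ∏ k, pauli (a k) (i k) (j k)

/-- Weight: the number of non-identity tensor factors. -/
noncomputable def wt {n : ℕ} (a : Fin n → Fin 4) : ℕ :=
  (Finset.univ.filter fun i => a i ≠ 0).card

/-- Support: the set of qubits on which the Pauli product acts nontrivially. -/
noncomputable def supp {n : ℕ} (a : Fin n → Fin 4) : Finset (Fin n) :=
  Finset.univ.filter fun i => a i ≠ 0

/-!
Up to a phase, Pauli matrices multiply like the Klein four-group: `σᵢ σⱼ = ε(i,j) σ_{i xor j}`,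
with `ε(j,i) = -ε(i,j)` exactly when `σᵢ` and `σⱼ` anticommute (`i`, `j` distinct and nonzero).
So `P(a) P(b) = λ P(c)` with `c = a xor b`, and `P(b) P(a) = (-1)^m P(a) P(b)` where `m` counts
the anticommuting sites; a nonzero commutator forces `m` odd. Sitewise, `[i xor j ≠ 0]` has the
parity of `[i ≠ 0] + [j ≠ 0] + [σᵢ, σⱼ anticommute]`, hence `wt c ≡ wt a + wt b + m ≡ 1 (mod 2)`.
-/

noncomputable def pauliMulCoeff : Fin 4 → Fin 4 → ℂ
  | 1, 2 => I
  | 2, 3 => I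
  | 3, 1 => I
  | 2, 1 => -I
  | 3, 2 => -I
  | 1, 3 => -I
  | _, _ => 1

abbrev PauliAnticommute (i j : Fin 4) : Prop := i ≠ 0 ∧ j ≠ 0 ∧ i ≠ j

lemma pauli_mul_pauli (i j : Fin 4) :
    pauli i * pauli j = pauliMulCoeff i j • pauli (i ^^^ j) := by
  ext x y
  fin_cases i <;> fin_cases j <;> fin_cases x <;> fin_cases y <;>
    simp [pauli, pauliMulCoeff, Matrix.mul_apply, Fin.sum_univ_two, Matrix.one_apply]

lemma pauliMulCoeff_ne_zero (i j : Fin 4) : pauliMulCoeff i j ≠ 0 := by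
  fin_cases i <;> fin_cases j <;> simp [pauliMulCoeff]

lemma pauliMulCoeff_swap (i j : Fin 4) :
    pauliMulCoeff j i = (if PauliAnticommute i j then -1 else 1) * pauliMulCoeff i j := by
  fin_cases i <;> fin_cases j <;> simp [pauliMulCoeff, PauliAnticommute]

lemma xor_ne_zero_parity : ∀ i j : Fin 4,
    (if i ^^^ j ≠ 0 then (1 : ZMod 2) else 0)
      = (if i ≠ 0 then 1 else 0) + (if j ≠ 0 then 1 else 0)
        + (if PauliAnticommute i j then 1 else 0) := by
  decide

lemma PauliProd_mul {n : ℕ} (a b : Fin n → Fin 4) :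
    PauliProd a * PauliProd b
      = (∏ k, pauliMulCoeff (a k) (b k)) • PauliProd (fun k => a k ^^^ b k) := by
  ext x y
  have hsite (k : Fin n) (z w : Fin 2) :
      ∑ m, pauli (a k) z m * pauli (b k) m w
        = pauliMulCoeff (a k) (b k) * pauli (a k ^^^ b k) z w := by
    simpa [Matrix.mul_apply] using congrFun (congrFun (pauli_mul_pauli (a k) (b k)) z) w
  simp only [Matrix.mul_apply, PauliProd, Matrix.of_apply, Matrix.smul_apply, smul_eq_mul,
    ← Finset.prod_mul_distrib, ← hsite]
  exact (Fintype.prod_sum fun k m => pauli (a k) (x k) m * pauli (b k) m (y k)).symm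

noncomputable def numAnticommuting {n : ℕ} (a b : Fin n → Fin 4) : ℕ :=
  (Finset.univ.filter fun k => PauliAnticommute (a k) (b k)).card

lemma PauliProd_mul_swap {n : ℕ} (a b : Fin n → Fin 4) :
    PauliProd b * PauliProd a
      = (-1 : ℂ) ^ numAnticommuting a b • (PauliProd a * PauliProd b) := by
  have hxor (i j : Fin 4) : j ^^^ i = i ^^^ j := by revert i j; decide
  have hsign : ∏ k, (if PauliAnticommute (a k) (b k) then (-1 : ℂ) else 1)
      = (-1) ^ numAnticommuting a b := by
    rw [Finset.prod_ite, Finset.prod_const, Finset.prod_const_one, mul_one]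
    rfl
  simp only [PauliProd_mul, smul_smul, hxor, pauliMulCoeff_swap (a _), Finset.prod_mul_distrib,
    hsign]

lemma odd_numAnticommuting {n : ℕ} {a b : Fin n → Fin 4}
    (h : PauliProd a * PauliProd b - PauliProd b * PauliProd a ≠ 0) :
    Odd (numAnticommuting a b) := by
  by_contra heven
  rw [Nat.not_odd_iff_even] at heven
  rw [PauliProd_mul_swap a b, heven.neg_one_pow, one_smul, sub_self] at h
  exact h rfl

lemma card_filter_cast_zmod_two {ι : Type*} [Fintype ι] (p : ι → Prop) [DecidablePred p] :
    ((Finset.univ.filter p).card : ZMod 2) = ∑ k, if p k then (1 : ZMod 2) else 0 := by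
  rw [Finset.card_filter, Nat.cast_sum]
  simp only [Nat.cast_ite, Nat.cast_one, Nat.cast_zero]

lemma wt_xor_cast {n : ℕ} (a b : Fin n → Fin 4) :
    (wt (fun k => a k ^^^ b k) : ZMod 2) = wt a + wt b + numAnticommuting a b := by
  simp only [wt, numAnticommuting, card_filter_cast_zmod_two, xor_ne_zero_parity,
    Finset.sum_add_distrib]

/-- If two Pauli products both have odd weight and their commutator is nonzero,
then their product is a nonzero scalar multiple of an odd-weight Pauli product. -/
theorem odd_weight_commutator {n : ℕ} (a b : Fin n → Fin 4)
    (ha : Odd (wt a)) (hb : Odd (wt b))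
    (hcomm : PauliProd a * PauliProd b - PauliProd b * PauliProd a ≠ 0) :
    ∃ (lam : ℂ) (c : Fin n → Fin 4), lam ≠ 0 ∧ Odd (wt c) ∧
      PauliProd a * PauliProd b = lam • PauliProd c := by
  refine ⟨_, _, Finset.prod_ne_zero_iff.mpr fun k _ => pauliMulCoeff_ne_zero _ _, ?_,
    PauliProd_mul a b⟩
  have parity {m : ℕ} (hm : Odd m) : (m : ZMod 2) = 1 := ZMod.natCast_eq_one_iff_odd.mpr hm
  rw [← ZMod.natCast_eq_one_iff_odd, wt_xor_cast, parity ha, parity hb,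
    parity (odd_numAnticommuting hcomm)]
  decide
end

section
/- If G' is the set of Pauli products commuting with a fixed nonidentity Pauli product P(α), then averaging conjugation over a transversal of G' projects any Hermitian matrix H onto the span of I and P(α); that is, (1/|G'|) Σ_{g ∈ G'} g H g† = a I + b P(α) for some real a, b. -/
/-!
Conjugation by `P(g)` multiplies `P(β)` by the sign `±1` recording whether the two commute, and
these signs satisfy the orthogonality relation `∑_g sign(g, a) sign(g, b) = 4ⁿ [a = b]`. Writing
the indicator of the commutant `G'` as `(1 + sign(g, α)) / 2`, the sum of `sign(g, β)` over `G'`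
is `(4ⁿ / 2) ([β = 0] + [β = α])`. Taking `β = 0` gives `|G'| = 4ⁿ / 2` (as `α ≠ 0`), so the
average keeps exactly the components of `H` along `I` and `P(α)`.
-/

open Matrix Complex

open scoped Classical

namespace Matrix

variable {ι m R : Type*} [Fintype ι] [CommSemiring R]

def piKronecker (A : ι → Matrix m m R) : Matrix (ι → m) (ι → m) R :=
  of fun i j => ∏ k, A k (i k) (j k)

theorem piKronecker_mul [Fintype m] [DecidableEq ι] (A B : ι → Matrix m m R) :
    piKronecker A * piKronecker B = piKronecker fun k => A k * B k := by
  ext i j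
  simp only [piKronecker, mul_apply, of_apply, Finset.prod_univ_sum, Fintype.piFinset_univ,
    Finset.prod_mul_distrib]

theorem piKronecker_one [DecidableEq m] : piKronecker (fun _ : ι => (1 : Matrix m m R)) = 1 := by
  ext i j
  by_cases h : i = j
  · subst h
    simp [piKronecker]
  · obtain ⟨k, hk⟩ := Function.ne_iff.mp h
    simp only [piKronecker, of_apply, one_apply, if_neg h]
    exact Finset.prod_eq_zero (Finset.mem_univ k) (if_neg hk)

theorem piKronecker_smul (c : ι → R) (A : ι → Matrix m m R) :
    piKronecker (fun k => c k • A k) = (∏ k, c k) • piKronecker A := by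
  ext i j
  simp [piKronecker, Finset.prod_mul_distrib]

end Matrix

def pauliSign (a b : Fin 4) : ℂ := if a ≠ 0 ∧ b ≠ 0 ∧ a ≠ b then -1 else 1

theorem pauli_mul_self (a : Fin 4) : pauli a * pauli a = 1 := by
  fin_cases a <;> ext i j <;> fin_cases i <;> fin_cases j <;>
    simp [pauli, mul_apply, Fin.sum_univ_two, one_apply]

theorem pauli_mul_comm_sign (a b : Fin 4) :
    pauli a * pauli b = pauliSign a b • (pauli b * pauli a) := by
  fin_cases a <;> fin_cases b <;> ext i j <;> fin_cases i <;> fin_cases j <;>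
    simp [pauli, pauliSign, mul_apply, Fin.sum_univ_two]

theorem pauliSign_zero_right (a : Fin 4) : pauliSign a 0 = 1 := by
  simp [pauliSign]

theorem pauliSign_eq_one_or_neg_one (a b : Fin 4) : pauliSign a b = 1 ∨ pauliSign a b = -1 := by
  unfold pauliSign; split_ifs <;> simp

theorem sum_pauliSign_mul_pauliSign (a b : Fin 4) :
    ∑ c, pauliSign c a * pauliSign c b = if a = b then 4 else 0 := by
  fin_cases a <;> fin_cases b <;> simp [Fin.sum_univ_four, pauliSign] <;> norm_num

theorem PauliProd_eq_piKronecker {n : ℕ} (a : Fin n → Fin 4) :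
    PauliProd a = piKronecker fun k => pauli (a k) := rfl

section PauliProd

variable {n : ℕ}

def commSign (c b : Fin n → Fin 4) : ℂ := ∏ k, pauliSign (c k) (b k)

theorem PauliProd_zero : PauliProd (fun _ : Fin n => (0 : Fin 4)) = 1 :=
  piKronecker_one

theorem PauliProd_mul_self (a : Fin n → Fin 4) : PauliProd a * PauliProd a = 1 := by
  simp only [PauliProd_eq_piKronecker, piKronecker_mul, pauli_mul_self, piKronecker_one]

theorem PauliProd_inv (a : Fin n → Fin 4) : (PauliProd a)⁻¹ = PauliProd a :=
  inv_eq_right_inv (PauliProd_mul_self a)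

theorem PauliProd_mul_comm_sign (c b : Fin n → Fin 4) :
    PauliProd c * PauliProd b = commSign c b • (PauliProd b * PauliProd c) := by
  simp only [PauliProd_eq_piKronecker, piKronecker_mul, commSign, ← piKronecker_smul]
  exact congrArg piKronecker (funext fun k => pauli_mul_comm_sign _ _)

theorem PauliProd_conj (c b : Fin n → Fin 4) :
    PauliProd c * PauliProd b * (PauliProd c)⁻¹ = commSign c b • PauliProd b := by
  rw [PauliProd_inv, PauliProd_mul_comm_sign, smul_mul_assoc, mul_assoc, PauliProd_mul_self,
    mul_one]

theorem PauliProd_mul_ne_zero (a b : Fin n → Fin 4) : PauliProd a * PauliProd b ≠ 0 := by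
  intro h
  have := congrArg (· * (PauliProd b * PauliProd a)) h
  simp only [mul_assoc, ← mul_assoc (PauliProd b), PauliProd_mul_self, one_mul, zero_mul] at this
  exact one_ne_zero this

theorem PauliProd_commute_iff (c a : Fin n → Fin 4) :
    PauliProd c * PauliProd a = PauliProd a * PauliProd c ↔ commSign c a = 1 := by
  rw [PauliProd_mul_comm_sign]
  conv_lhs => rhs; rw [← one_smul ℂ (PauliProd a * PauliProd c)]
  exact (smul_left_injective ℂ (PauliProd_mul_ne_zero a c)).eq_iff

theorem commSign_zero_right (c : Fin n → Fin 4) : commSign c (fun _ => 0) = 1 :=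
  Finset.prod_eq_one fun k _ => pauliSign_zero_right (c k)

theorem commSign_eq_one_or_neg_one (c b : Fin n → Fin 4) :
    commSign c b = 1 ∨ commSign c b = -1 :=
  Finset.prod_induction _ (fun x => x = 1 ∨ x = -1)
    (by rintro x y (rfl | rfl) (rfl | rfl) <;> norm_num) (Or.inl rfl)
    fun k _ => pauliSign_eq_one_or_neg_one _ _

theorem sum_commSign_mul_commSign (a b : Fin n → Fin 4) :
    ∑ c, commSign c a * commSign c b = if a = b then 4 ^ n else 0 := by
  simp only [commSign, ← Finset.prod_mul_distrib]
  rw [← Fintype.prod_sum (fun k c => pauliSign c (a k) * pauliSign c (b k))]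
  simp only [sum_pauliSign_mul_pauliSign]
  split_ifs with h
  · simp [h]
  · obtain ⟨k, hk⟩ := Function.ne_iff.mp h
    exact Finset.prod_eq_zero (Finset.mem_univ k) (if_neg hk)

end PauliProd

section Commutant

variable {n : ℕ}

open Finset

noncomputable def commutant (α : Fin n → Fin 4) : Finset (Fin n → Fin 4) :=
  univ.filter fun c => PauliProd c * PauliProd α = PauliProd α * PauliProd c

/-- `(1 + commSign g α) / 2` is the indicator of `commutant α`, which turns the sum into two
instances of the orthogonality relation `sum_commSign_mul_commSign`. -/
theorem two_mul_sum_commutant_commSign (α β : Fin n → Fin 4) :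
    2 * ∑ g ∈ commutant α, commSign g β
      = (if β = (fun _ => 0) then 4 ^ n else 0) + if β = α then 4 ^ n else 0 := by
  calc 2 * ∑ g ∈ commutant α, commSign g β
      = ∑ g, (commSign g (fun _ => 0) + commSign g α) * commSign g β := by
        rw [commutant, sum_filter, mul_sum]
        refine sum_congr rfl fun g _ => ?_
        simp only [commSign_zero_right, PauliProd_commute_iff]
        rcases commSign_eq_one_or_neg_one g α with h | h <;> rw [h] <;> norm_num
    _ = _ := by
        simp only [add_mul, sum_add_distrib, sum_commSign_mul_commSign, eq_comm (a := β)]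

theorem two_mul_card_commutant {α : Fin n → Fin 4} (hα : α ≠ fun _ => 0) :
    2 * (#(commutant α) : ℂ) = 4 ^ n := by
  simpa only [commSign_zero_right, sum_const, nsmul_one, if_true, Ne.symm hα, if_false,
    add_zero] using two_mul_sum_commutant_commSign α (fun _ => 0)

theorem sum_commutant_commSign {α : Fin n → Fin 4} (hα : α ≠ fun _ => 0) (β : Fin n → Fin 4) :
    ∑ g ∈ commutant α, commSign g β
      = (if β = (fun _ => 0) then (#(commutant α) : ℂ) else 0)
        + if β = α then (#(commutant α) : ℂ) else 0 := by
  apply mul_left_cancel₀ (two_ne_zero (α := ℂ))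
  rw [two_mul_sum_commutant_commSign, mul_add, mul_ite, mul_ite, mul_zero,
    two_mul_card_commutant hα]

theorem sum_commutant_conj_PauliProd {α : Fin n → Fin 4} (hα : α ≠ fun _ => 0)
    (β : Fin n → Fin 4) :
    ∑ g ∈ commutant α, PauliProd g * PauliProd β * (PauliProd g)⁻¹
      = (if β = (fun _ => 0) then (#(commutant α) : ℂ) • PauliProd β else 0)
        + if β = α then (#(commutant α) : ℂ) • PauliProd β else 0 := by
  simp only [PauliProd_conj, ← sum_smul, sum_commutant_commSign hα, add_smul, ite_smul,
    zero_smul]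

end Commutant

/-- Averaging conjugation over the Pauli products commuting with a fixed
nonidentity Pauli product P(α) projects a Hermitian matrix (expanded with real
coefficients in the Pauli basis) onto the span of I and P(α). -/
theorem group_average_projection {n : ℕ} (α : Fin n → Fin 4)
    (hα : α ≠ fun _ => 0) (hco : (Fin n → Fin 4) → ℝ)
    (H : Matrix (Fin n → Fin 2) (Fin n → Fin 2) ℂ)
    (hH : H = ∑ β : Fin n → Fin 4, (hco β : ℂ) • PauliProd β) :
    ((((Finset.univ.filter fun c : Fin n → Fin 4 =>
          PauliProd c * PauliProd α = PauliProd α * PauliProd c).card : ℂ))⁻¹) •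
        ∑ g ∈ Finset.univ.filter fun c : Fin n → Fin 4 =>
            PauliProd c * PauliProd α = PauliProd α * PauliProd c,
          PauliProd g * H * (PauliProd g)⁻¹
      = (hco (fun _ => 0) : ℂ) • (1 : Matrix (Fin n → Fin 2) (Fin n → Fin 2) ℂ)
        + (hco α : ℂ) • PauliProd α := by
  change ((commutant α).card : ℂ)⁻¹ • ∑ g ∈ commutant α, PauliProd g * H * (PauliProd g)⁻¹ = _
  have hN : ((commutant α).card : ℂ) ≠ 0 := right_ne_zero_of_mul (a := 2) <| by
    rw [two_mul_card_commutant hα]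
    exact pow_ne_zero n (by norm_num)
  calc ((commutant α).card : ℂ)⁻¹ • ∑ g ∈ commutant α, PauliProd g * H * (PauliProd g)⁻¹
      = ((commutant α).card : ℂ)⁻¹ •
          ∑ β, (hco β : ℂ) • ∑ g ∈ commutant α, PauliProd g * PauliProd β * (PauliProd g)⁻¹ := by
        simp only [hH, Finset.mul_sum, Finset.sum_mul, mul_smul_comm, smul_mul_assoc,
          Finset.smul_sum]
        rw [Finset.sum_comm]
    _ = ((commutant α).card : ℂ)⁻¹ • ((commutant α).card : ℂ) •
          ((hco (fun _ => 0) : ℂ) • 1 + (hco α : ℂ) • PauliProd α) := by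
        simp only [sum_commutant_conj_PauliProd hα, smul_add, smul_ite, smul_zero,
          Finset.sum_add_distrib, Finset.sum_ite_eq', Finset.mem_univ, if_true, PauliProd_zero,
          smul_comm ((commutant α).card : ℂ)]
    _ = _ := inv_smul_smul₀ hN _
end
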